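/- arXiv:1806.07529 — 2 statements merged into one kernel-verified Lean document; each statement's English description precedes it below -/
import Mathlib

section
/- Let g : {c ∈ ℝ^N : ‖c‖ ≤ a} → ℝ^D be given by g(c) = g₀ + Ac + h(c), where A is a D×N real matrix whose r largest singular values are all at least σ > 0, and h satisfies ‖h(c)‖ ≤ L‖c‖² for all ‖c‖ ≤ a. Then for every ε with 0 < ε^{1/2} ≤ a, the probability of the set {c : ‖g(c)‖ ≤ Lε} relative to the ball {c : ‖c‖ ≤ ε^{1/2}} is at most N! · 2^r · L^r · ε^{r/2} / σ^r. -/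
open MeasureTheory Metric Module
open scoped Nat

/-!
On the ball of radius `√ε` the remainder `h` is at most `Lε`, so the set in question lies in
`{c | ‖g₀ + A c‖ ≤ 2Lε}`. Decompose `ℝ^N = V ⊕ Vᗮ`, where `A` expands `V` by `σ`: two points of
that set differing by a vector of `V` are at distance at most `4Lε/σ`, so every slice parallel to
`V` has volume at most `(4Lε/σ)^r`, while the `Vᗮ`-component stays in a ball of radius `√ε`, of
volume at most `(2√ε)^(N-r)`. The ball of radius `√ε` contains a cube of side `2√ε/√N`, and
`√N^N ≤ N!` absorbs the loss.
-/

theorem Nat.pow_self_le_factorial_sq (n : ℕ) : n ^ n ≤ n ! ^ 2 := by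
  calc n ^ n = ∏ _i ∈ Finset.range n, n := by rw [Finset.prod_const, Finset.card_range]
    _ ≤ ∏ i ∈ Finset.range n, (i + 1) * (n - i) := by
        refine Finset.prod_le_prod' fun i hi => ?_
        have hi : i < n := Finset.mem_range.1 hi
        nlinarith [Nat.sub_add_cancel hi.le]
    _ = n ! ^ 2 := by
        rw [Finset.prod_mul_distrib, Finset.prod_range_add_one_eq_factorial, sq]
        congr 1
        rw [← Finset.prod_range_reflect, ← Finset.prod_range_add_one_eq_factorial]
        exact Finset.prod_congr rfl fun i hi => by have := Finset.mem_range.1 hi; omega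

theorem Real.sqrt_pow_self_le_factorial (n : ℕ) : √n ^ n ≤ n ! := by
  rw [← pow_le_pow_iff_left₀ (by positivity) (by positivity) two_ne_zero, ← pow_mul, mul_comm,
    pow_mul, Real.sq_sqrt n.cast_nonneg]
  exact_mod_cast n.pow_self_le_factorial_sq

theorem mul_pow_mul_pow_sub_le {r N : ℕ} (hr : r ≤ N) {δ u : ℝ} (hδ : 0 ≤ δ) (hu : 0 ≤ u) :
    (δ * u) ^ r * u ^ (N - r) ≤ N ! * δ ^ r * (u / √N) ^ N := by
  have hu : u ^ N ≤ N ! * (u / √N) ^ N := by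
    rcases N.eq_zero_or_pos with rfl | hN
    · simp
    · calc u ^ N = (u / √N) ^ N * √N ^ N := by
            rw [← mul_pow, div_mul_cancel₀ _ (by positivity)]
        _ ≤ (u / √N) ^ N * N ! := by gcongr; exact Real.sqrt_pow_self_le_factorial N
        _ = N ! * (u / √N) ^ N := mul_comm _ _
  calc (δ * u) ^ r * u ^ (N - r) = δ ^ r * u ^ N := by rw [mul_pow, mul_assoc, pow_mul_pow_sub _ hr]
    _ ≤ δ ^ r * (N ! * (u / √N) ^ N) := by gcongr
    _ = N ! * δ ^ r * (u / √N) ^ N := by ring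

theorem MeasureTheory.Measure.prod_apply_le_of_snd_mem {α β : Type*} [MeasurableSpace α]
    [MeasurableSpace β] {μ : Measure α} {ν : Measure β} [SFinite μ] [SFinite ν]
    {T : Set (α × β)} (hT : MeasurableSet T) {t : Set β} (ht : MeasurableSet t)
    (hTt : ∀ p ∈ T, p.2 ∈ t) {C : ENNReal} (hC : ∀ y ∈ t, μ ((·, y) ⁻¹' T) ≤ C) :
    μ.prod ν T ≤ C * ν t := by
  rw [Measure.prod_apply_symm hT, ← lintegral_indicator_const ht]
  refine lintegral_mono fun y => ?_
  by_cases hy : y ∈ t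
  · simpa [hy] using hC y hy
  · have : (·, y) ⁻¹' T = ∅ := Set.eq_empty_of_forall_notMem fun x hx => hy (hTt _ hx)
    simp [this]

theorem EuclideanSpace.dist_le_sqrt_card_mul_dist_ofLp {ι : Type*} [Fintype ι]
    (x y : EuclideanSpace ℝ ι) :
    dist x y ≤ √(Fintype.card ι) * dist (WithLp.ofLp x) (WithLp.ofLp y) := by
  simpa [NNReal.coe_rpow, Real.sqrt_eq_rpow]
    using (PiLp.antilipschitzWith_ofLp 2 (fun _ : ι => ℝ)).le_mul_dist x y

theorem EuclideanSpace.ofReal_pow_le_volume_closedBall {ι : Type*} [Fintype ι]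
    (x : EuclideanSpace ℝ ι) {ρ : ℝ} (hρ : 0 ≤ ρ) :
    ENNReal.ofReal (2 * ρ / √(Fintype.card ι)) ^ Fintype.card ι ≤ volume (closedBall x ρ) := by
  set q := ρ / √(Fintype.card ι)
  have hq : 0 ≤ q := by positivity
  have hcube : WithLp.ofLp ⁻¹' closedBall (WithLp.ofLp x) q ⊆ closedBall x ρ := by
    intro y hy
    rw [mem_closedBall]
    refine (dist_le_sqrt_card_mul_dist_ofLp y x).trans ?_
    rcases (Real.sqrt_nonneg (Fintype.card ι : ℝ)).eq_or_lt with h | h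
    · simp [← h, hρ]
    · calc √(Fintype.card ι) * dist (WithLp.ofLp y) (WithLp.ofLp x) ≤ √(Fintype.card ι) * q := by
            gcongr; exact hy
        _ = ρ := mul_div_cancel₀ ρ h.ne'
  calc ENNReal.ofReal (2 * ρ / √(Fintype.card ι)) ^ Fintype.card ι
      = volume (closedBall (WithLp.ofLp x) q) := by
        rw [Real.volume_pi_closedBall _ hq, ENNReal.ofReal_pow (by positivity), mul_div_assoc]
    _ = volume (WithLp.ofLp ⁻¹' closedBall (WithLp.ofLp x) q) :=
        ((volume_preserving_symm_measurableEquiv_toLp ι).measure_preimage_equiv _).symm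
    _ ≤ volume (closedBall x ρ) := measure_mono hcube

theorem norm_sub_le_of_norm_add_apply_le {E F : Type*} [SeminormedAddCommGroup E]
    [SeminormedAddCommGroup F] [Module ℝ E] [Module ℝ F] (f : E →ₗ[ℝ] F) {V : Submodule ℝ E}
    {σ : ℝ} (hσ : 0 < σ) (hV : ∀ v ∈ V, σ * ‖v‖ ≤ ‖f v‖) (y : F) {η : ℝ} {c₁ c₂ : E}
    (h₁ : ‖y + f c₁‖ ≤ η) (h₂ : ‖y + f c₂‖ ≤ η) (hc : c₁ - c₂ ∈ V) :
    ‖c₁ - c₂‖ ≤ 2 * η / σ := by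
  rw [le_div_iff₀' hσ]
  calc σ * ‖c₁ - c₂‖ ≤ ‖f (c₁ - c₂)‖ := hV _ hc
    _ = ‖(y + f c₁) - (y + f c₂)‖ := by rw [map_sub, add_sub_add_left_eq_sub]
    _ ≤ ‖y + f c₁‖ + ‖y + f c₂‖ := norm_sub_le _ _
    _ ≤ 2 * η := by linarith

theorem inter_closedBall_subset_of_norm_le_mul_sq {E F : Type*} [SeminormedAddCommGroup E]
    [SeminormedAddCommGroup F] {g f h : E → F} {a L t η : ℝ} (hL : 0 ≤ L) (hta : t ≤ a)
    (hg : ∀ c, ‖c‖ ≤ a → g c = f c + h c) (hh : ∀ c, ‖c‖ ≤ a → ‖h c‖ ≤ L * ‖c‖ ^ 2) :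
    {c | ‖g c‖ ≤ η} ∩ closedBall 0 t ⊆ {c | ‖f c‖ ≤ η + L * t ^ 2} ∩ closedBall 0 t := by
  rintro c ⟨hgc, hct⟩
  have hc : ‖c‖ ≤ t := mem_closedBall_zero_iff.1 hct
  have hhc : ‖h c‖ ≤ L * t ^ 2 := (hh c (hc.trans hta)).trans (by gcongr)
  refine ⟨?_, hct⟩
  calc ‖f c‖ = ‖g c - h c‖ := by rw [hg c (hc.trans hta), add_sub_cancel_right]
    _ ≤ ‖g c‖ + ‖h c‖ := norm_sub_le _ _
    _ ≤ η + L * t ^ 2 := add_le_add hgc hhc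

theorem Submodule.norm_le_norm_add_of_mem_orthogonal {E : Type*} [NormedAddCommGroup E]
    [InnerProductSpace ℝ E] (V : Submodule ℝ E) {v w : E} (hv : v ∈ V)
    (hw : w ∈ Vᗮ) : ‖w‖ ≤ ‖v + w‖ := by
  have h := norm_add_sq_eq_norm_sq_add_norm_sq_real (V.inner_right_of_mem_orthogonal hv hw)
  nlinarith [norm_nonneg w, norm_nonneg (v + w), sq_nonneg ‖v‖]

section

variable {E : Type*} [NormedAddCommGroup E] [InnerProductSpace ℝ E] [FiniteDimensional ℝ E]
  [MeasurableSpace E] [BorelSpace E]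

theorem InnerProductSpace.volume_le_ediam_pow (s : Set E) :
    volume s ≤ ediam s ^ finrank ℝ E := by
  let e : E ≃ᵐ (Fin (finrank ℝ E) → ℝ) :=
    (stdOrthonormalBasis ℝ E).repr.toHomeomorph.toMeasurableEquiv.trans
      (MeasurableEquiv.toLp 2 _).symm
  have he : MeasurePreserving e :=
    (EuclideanSpace.volume_preserving_symm_measurableEquiv_toLp _).comp
      (stdOrthonormalBasis ℝ E).measurePreserving_repr
  have hlip : LipschitzWith 1 e := by
    have h := (PiLp.lipschitzWith_ofLp 2 _).comp (stdOrthonormalBasis ℝ E).repr.lipschitz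
    rw [one_mul] at h
    exact h
  calc volume s = volume (e '' s) := by
        rw [e.image_eq_preimage_symm, he.symm.measure_preimage_equiv]
    _ ≤ ediam (e '' s) ^ finrank ℝ E := by
        simpa using Real.volume_pi_le_diam_pow (e '' s)
    _ ≤ ediam s ^ finrank ℝ E := by
        gcongr
        simpa using hlip.ediam_image_le s

theorem InnerProductSpace.volume_closedBall_le (x : E) (ρ : ℝ) :
    volume (closedBall x ρ) ≤ ENNReal.ofReal (2 * ρ) ^ finrank ℝ E := by
  refine (volume_le_ediam_pow _).trans (pow_le_pow_left₀ zero_le ?_ _)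
  refine ediam_le fun y hy z hz => ?_
  rw [edist_dist]
  exact ENNReal.ofReal_le_ofReal
    (by linarith [dist_triangle_right y z x, mem_closedBall.1 hy, mem_closedBall.1 hz])

theorem volume_le_of_subset_closedBall_of_norm_sub_le (V : Submodule ℝ E) {S : Set E}
    (hS : MeasurableSet S) {ρ δ : ℝ} (hSρ : S ⊆ closedBall 0 ρ)
    (hSδ : ∀ c₁ ∈ S, ∀ c₂ ∈ S, c₁ - c₂ ∈ V → ‖c₁ - c₂‖ ≤ δ) :
    volume S ≤ ENNReal.ofReal δ ^ finrank ℝ V * ENNReal.ofReal (2 * ρ) ^ finrank ℝ Vᗮ := by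
  have hΦ : MeasurePreserving (V.measurableEquivProd (0 : E)) := by
    simpa only [InnerProductSpace.euclideanHausdorffMeasure_eq_volume]
      using V.measurePreserving_measurableEquivProd (0 : E)
  rw [← hΦ.symm.measure_preimage_equiv S, Measure.volume_eq_prod]
  refine (Measure.prod_apply_le_of_snd_mem ((V.measurableEquivProd 0).symm.measurable hS)
    measurableSet_closedBall (t := closedBall (0 : Vᗮ) ρ)
    (C := ENNReal.ofReal δ ^ finrank ℝ V) ?_ ?_).trans ?_
  · rintro ⟨v, w⟩ hvw
    have hvw : ‖(v : E) + w‖ ≤ ρ := by simpa using hSρ hvw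
    simpa using (V.norm_le_norm_add_of_mem_orthogonal v.2 w.2).trans hvw
  · intro w _
    refine (InnerProductSpace.volume_le_ediam_pow _).trans (pow_le_pow_left₀ zero_le ?_ _)
    refine ediam_le fun v₁ hv₁ v₂ hv₂ => ?_
    simp only [Set.mem_preimage, Submodule.measurableEquivProd_symm_apply, vadd_eq_add,
      add_zero] at hv₁ hv₂
    have h := hSδ _ hv₁ _ hv₂ (by simpa using (v₁ - v₂).2)
    rw [edist_dist, dist_eq_norm]
    exact ENNReal.ofReal_le_ofReal (by simpa using h)
  · gcongr
    exact InnerProductSpace.volume_closedBall_le _ _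

theorem volume_norm_add_apply_le_inter_closedBall_le {F : Type*} [NormedAddCommGroup F]
    [NormedSpace ℝ F] (f : E →ₗ[ℝ] F) (V : Submodule ℝ E) {σ : ℝ} (hσ : 0 < σ)
    (hV : ∀ v ∈ V, σ * ‖v‖ ≤ ‖f v‖) (y : F) (η ρ : ℝ) :
    volume ({c | ‖y + f c‖ ≤ η} ∩ closedBall 0 ρ)
      ≤ ENNReal.ofReal (2 * η / σ) ^ finrank ℝ V * ENNReal.ofReal (2 * ρ) ^ finrank ℝ Vᗮ := by
  have hmeas : MeasurableSet ({c | ‖y + f c‖ ≤ η} ∩ closedBall 0 ρ) :=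
    ((isClosed_le (by fun_prop) continuous_const).inter isClosed_closedBall).measurableSet
  exact volume_le_of_subset_closedBall_of_norm_sub_le V hmeas Set.inter_subset_right
    fun c₁ h₁ c₂ h₂ => norm_sub_le_of_norm_add_apply_le f hσ hV y h₁.1 h₂.1

end

theorem stmt1_general (D N r : ℕ) (A : Matrix (Fin D) (Fin N) ℝ)
    (g₀ : EuclideanSpace ℝ (Fin D)) (σ : ℝ) (hσ : 0 < σ)
    (hA : ∃ V : Submodule ℝ (EuclideanSpace ℝ (Fin N)),
      Module.finrank ℝ V = r ∧ ∀ v ∈ V, σ * ‖v‖ ≤ ‖Matrix.toEuclideanLin A v‖)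
    (L a : ℝ) (hL : 0 < L)
    (g h : EuclideanSpace ℝ (Fin N) → EuclideanSpace ℝ (Fin D))
    (hg : ∀ c, ‖c‖ ≤ a → g c = g₀ + Matrix.toEuclideanLin A c + h c)
    (hh : ∀ c, ‖c‖ ≤ a → ‖h c‖ ≤ L * ‖c‖ ^ 2)
    (ε : ℝ) (hε : 0 < ε) (hεa : Real.sqrt ε ≤ a) :
    volume ({c : EuclideanSpace ℝ (Fin N) | ‖g c‖ ≤ L * ε} ∩ closedBall 0 (Real.sqrt ε))
        / volume (closedBall (0 : EuclideanSpace ℝ (Fin N)) (Real.sqrt ε))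
      ≤ ENNReal.ofReal ((N.factorial : ℝ) * 2 ^ r * L ^ r * Real.sqrt ε ^ r / σ ^ r) := by
  obtain ⟨V, hVr, hV⟩ := hA
  set t := √ε
  have ht : 0 ≤ t := Real.sqrt_nonneg ε
  have hδ : 2 * (L * ε + L * t ^ 2) / σ = 2 * L * t / σ * (2 * t) := by
    rw [Real.sq_sqrt hε.le, ← Real.mul_self_sqrt hε.le]; ring
  have hQ : (N ! * (2 * L * t / σ) ^ r : ℝ) = N ! * 2 ^ r * L ^ r * t ^ r / σ ^ r := by
    rw [div_pow, mul_pow, mul_pow]; ring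
  have hdim := V.finrank_add_finrank_orthogonal
  rw [finrank_euclideanSpace_fin, hVr] at hdim
  have hlin := volume_norm_add_apply_le_inter_closedBall_le _ V hσ hV g₀ (L * ε + L * t ^ 2) t
  rw [hVr, show finrank ℝ Vᗮ = N - r by omega, hδ] at hlin
  refine ENNReal.div_le_of_le_mul ?_
  calc _ ≤ _ := measure_mono (inter_closedBall_subset_of_norm_le_mul_sq hL.le hεa hg hh)
    _ ≤ _ := hlin
    _ = ENNReal.ofReal ((2 * L * t / σ * (2 * t)) ^ r * (2 * t) ^ (N - r)) := by
        rw [← ENNReal.ofReal_pow (by positivity), ← ENNReal.ofReal_pow (by positivity),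
          ← ENNReal.ofReal_mul (by positivity)]
    _ ≤ ENNReal.ofReal (N ! * (2 * L * t / σ) ^ r * (2 * t / √N) ^ N) :=
        ENNReal.ofReal_le_ofReal (mul_pow_mul_pow_sub_le (by omega) (by positivity) (by positivity))
    _ ≤ _ := by
        rw [ENNReal.ofReal_mul (by positivity), hQ, ENNReal.ofReal_pow (by positivity)]
        gcongr
        simpa using EuclideanSpace.ofReal_pow_le_volume_closedBall (0 : EuclideanSpace ℝ (Fin N)) ht

/-- Nonlinear transfer of volume lemma. If `g(c) = g₀ + Ac + h(c)` on the ball `‖c‖ ≤ a`,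
with `‖h(c)‖ ≤ L‖c‖²`, and the `r` largest singular values of `A` are at least `σ > 0`,
then for `0 < √ε ≤ a` the probability of `‖g(c)‖ ≤ Lε` relative to the ball of radius `√ε`
is at most `N! 2^r L^r ε^{r/2} / σ^r`. -/
theorem stmt1 (D N r : ℕ) (A : Matrix (Fin D) (Fin N) ℝ)
    (g₀ : EuclideanSpace ℝ (Fin D)) (σ : ℝ) (hσ : 0 < σ)
    (hA : ∃ V : Submodule ℝ (EuclideanSpace ℝ (Fin N)),
      Module.finrank ℝ V = r ∧ ∀ v ∈ V, σ * ‖v‖ ≤ ‖Matrix.toEuclideanLin A v‖)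
    (L a : ℝ) (hL : 0 < L) (ha : 0 < a)
    (g h : EuclideanSpace ℝ (Fin N) → EuclideanSpace ℝ (Fin D))
    (hg : ∀ c, ‖c‖ ≤ a → g c = g₀ + Matrix.toEuclideanLin A c + h c)
    (hh : ∀ c, ‖c‖ ≤ a → ‖h c‖ ≤ L * ‖c‖ ^ 2)
    (ε : ℝ) (hε : 0 < ε) (hεa : Real.sqrt ε ≤ a) :
    volume ({c : EuclideanSpace ℝ (Fin N) | ‖g c‖ ≤ L * ε} ∩ closedBall 0 (Real.sqrt ε))
        / volume (closedBall (0 : EuclideanSpace ℝ (Fin N)) (Real.sqrt ε))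
      ≤ ENNReal.ofReal ((N.factorial : ℝ) * 2 ^ r * L ^ r * Real.sqrt ε ^ r / σ ^ r) :=
  stmt1_general D N r A g₀ σ hσ hA L a hL g h hg hh ε hε hεa
end

section
/- Let z₁, …, z_{D'} be distinct points in ℝ^d and let D⁺ ≥ 2D' − 1. Then the Hermite matrix with (d+1)D' rows, consisting of the D' rows with entries p_α(z_i) together with the dD' rows with entries given by the components of the gradients ∇p_α(z_i), for α ranging over I_{D⁺}, has rank equal to (d+1)D' (the number of its rows). -/
/-- The monomial `p_α(z) = z^α = ∏ i, (z i)^(α i)`. -/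
def pMon {d : ℕ} (α : Fin d → ℕ) (z : Fin d → ℝ) : ℝ := ∏ i, z i ^ α i

open Finset MvPolynomial

lemma hasFDerivAt_pMon {d : ℕ} (α : Fin d → ℕ) (x : Fin d → ℝ) :
    HasFDerivAt (pMon α)
      (∑ i, (∏ j ∈ univ.erase i, x j ^ α j) •
        (((α i : ℝ) * x i ^ (α i - 1)) • ContinuousLinearMap.proj (R := ℝ) (φ := fun _ : Fin d => ℝ) i)) x := by
  exact HasFDerivAt.finset_prod (fun i _ => (hasDerivAt_pow (α i) (x i)).comp_hasFDerivAt x (hasFDerivAt_apply i x))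

lemma fderiv_pMon_eq {d : ℕ} (α : Fin d → ℕ) (x : Fin d → ℝ) (k : Fin d) :
    fderiv ℝ (pMon α) x (Pi.single k 1) =
      eval x (pderiv k (monomial (Finsupp.equivFunOnFinite.symm α) (1:ℝ))) := by
  rw [(hasFDerivAt_pMon α x).fderiv]
  rw [ContinuousLinearMap.sum_apply]
  have hL : ∀ i : Fin d, ((∏ j ∈ univ.erase i, x j ^ α j) •
        (((α i : ℝ) * x i ^ (α i - 1)) • ContinuousLinearMap.proj (R := ℝ) (φ := fun _ : Fin d => ℝ) i))
        (Pi.single k 1) =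
      (∏ j ∈ univ.erase i, x j ^ α j) * ((α i : ℝ) * x i ^ (α i - 1)) * ((Pi.single k 1 : Fin d → ℝ) i) := by
    intro i; simp [mul_assoc]
  rw [Finset.sum_congr rfl fun i _ => hL i]
  rw [Finset.sum_eq_single k (by intro i _ hik; simp [Pi.single_eq_of_ne hik]) (by simp)]
  rw [pderiv_monomial, eval_monomial]
  rw [Finsupp.prod_fintype _ _ (fun j => pow_zero (x j))]
  simp only [Pi.single_eq_same, mul_one, one_mul]
  have hmk : (Finsupp.equivFunOnFinite.symm α) k = α k := rfl
  rw [hmk]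
  rcases Nat.eq_zero_or_pos (α k) with h0 | hpos
  · simp [h0]
  · have he : ∀ j : Fin d, (Finsupp.equivFunOnFinite.symm α - Finsupp.single k 1 : Fin d →₀ ℕ) j
        = if j = k then α k - 1 else α j := by
      intro j
      simp [Finsupp.sub_apply, Finsupp.single_apply, eq_comm (a := k)]
      split <;> simp_all
    rw [← Finset.mul_prod_erase univ _ (mem_univ k)]
    have h2 : (∏ j ∈ univ.erase k, x j ^ ((Finsupp.equivFunOnFinite.symm α - Finsupp.single k 1 : Fin d →₀ ℕ) j)) = ∏ j ∈ univ.erase k, x j ^ α j :=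
      Finset.prod_congr rfl fun j hj => by rw [he j, if_neg (Finset.ne_of_mem_erase hj)]
    rw [h2, he k, if_pos rfl]
    ring

lemma pMon_eq_eval {d : ℕ} (m : Fin d →₀ ℕ) (x : Fin d → ℝ) :
    pMon (⇑m) x = eval x (monomial m (1:ℝ)) := by
  rw [eval_monomial, one_mul, Finsupp.prod_fintype _ _ (fun j => pow_zero (x j))]
  rfl

lemma aeval_eq_eval' {d : ℕ} (x : Fin d → ℝ) (p : MvPolynomial (Fin d) ℝ) :
    aeval x p = eval x p := rfl

/-- the auxiliary quadratic polynomial vanishing to second order at `w`. -/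
noncomputable def gpoly {d : ℕ} (w : Fin d → ℝ) : MvPolynomial (Fin d) ℝ :=
  ∑ k, (X k - C (w k)) * (X k - C (w k))

lemma eval_gpoly {d : ℕ} (w x : Fin d → ℝ) :
    eval x (gpoly w) = ∑ k, (x k - w k) * (x k - w k) := by
  simp [gpoly]

lemma eval_gpoly_self {d : ℕ} (w : Fin d → ℝ) : eval w (gpoly w) = 0 := by
  simp [eval_gpoly]

lemma eval_gpoly_pos {d : ℕ} {w x : Fin d → ℝ} (h : x ≠ w) : 0 < eval x (gpoly w) := by
  rw [eval_gpoly]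
  obtain ⟨k, hk⟩ := Function.ne_iff.1 h
  exact Finset.sum_pos' (fun k _ => mul_self_nonneg _)
    ⟨k, mem_univ k, mul_self_pos.2 (sub_ne_zero.2 hk)⟩

lemma eval_pderiv_gpoly_self {d : ℕ} (w : Fin d → ℝ) (k : Fin d) :
    eval w (pderiv k (gpoly w)) = 0 := by
  classical
  simp [gpoly, pderiv_mul, map_sum]

lemma totalDegree_gpoly {d : ℕ} (w : Fin d → ℝ) : (gpoly w).totalDegree ≤ 2 := by
  refine (totalDegree_finset_sum _ _).trans (Finset.sup_le fun k _ => ?_)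
  refine (totalDegree_mul _ _).trans ?_
  have h1 : (X k - C (w k) : MvPolynomial (Fin d) ℝ).totalDegree ≤ 1 := by
    rw [sub_eq_add_neg, ← C_neg]
    refine (totalDegree_add _ _).trans ?_
    simp [totalDegree_X, totalDegree_C]
  omega

/-- Lagrange-type basis polynomial: equals 1 at `z i`, vanishes to second order at `z j`, `j ≠ i`. -/
noncomputable def qpoly {d D' : ℕ} (z : Fin D' → Fin d → ℝ) (i : Fin D') : MvPolynomial (Fin d) ℝ :=
  ∏ j ∈ univ.erase i, (C ((eval (z i) (gpoly (z j)))⁻¹) * gpoly (z j))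

lemma eval_qpoly_self {d D' : ℕ} {z : Fin D' → Fin d → ℝ} (hz : Function.Injective z) (i : Fin D') :
    eval (z i) (qpoly z i) = 1 := by
  rw [qpoly, map_prod]
  refine Finset.prod_eq_one fun j hj => ?_
  have hne : z i ≠ z j := fun h => Finset.ne_of_mem_erase hj (hz h).symm
  have hpos := eval_gpoly_pos hne
  simp only [map_mul, eval_C]
  exact inv_mul_cancel₀ (ne_of_gt hpos)

lemma eval_qpoly_ne {d D' : ℕ} (z : Fin D' → Fin d → ℝ) {i j : Fin D'} (hij : j ≠ i) :
    eval (z j) (qpoly z i) = 0 := by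
  rw [qpoly, map_prod]
  refine Finset.prod_eq_zero (Finset.mem_erase.2 ⟨hij, mem_univ j⟩) ?_
  simp [eval_gpoly_self]

lemma eval_pderiv_qpoly_ne {d D' : ℕ} (z : Fin D' → Fin d → ℝ) {i j : Fin D'} (hij : j ≠ i)
    (k : Fin d) : eval (z j) (pderiv k (qpoly z i)) = 0 := by
  classical
  rw [qpoly, ← Finset.mul_prod_erase _ _ (Finset.mem_erase.2 ⟨hij, mem_univ j⟩), pderiv_mul]
  simp [pderiv_mul, eval_gpoly_self, eval_pderiv_gpoly_self]

lemma totalDegree_qpoly {d D' : ℕ} (z : Fin D' → Fin d → ℝ) (i : Fin D') :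
    (qpoly z i).totalDegree ≤ 2 * (D' - 1) := by
  refine (totalDegree_finset_prod _ _).trans ?_
  have h1 : ∀ j ∈ univ.erase i, (C ((eval (z i) (gpoly (z j)))⁻¹) * gpoly (z j)).totalDegree ≤ 2 := by
    intro j _
    refine (totalDegree_mul _ _).trans ?_
    have := totalDegree_gpoly (z j)
    simp only [totalDegree_C]
    omega
  refine (Finset.sum_le_sum h1).trans ?_
  have hcard : (univ.erase i).card = D' - 1 := by
    rw [Finset.card_erase_of_mem (mem_univ i), Finset.card_univ, Fintype.card_fin]
  simp [hcard, mul_comm]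

/-- The (complete) Hermite matrix at distinct points `z₁, …, z_{D'}`, consisting of the `D'`
rows with entries `p_α(z_i)` together with the `d·D'` rows with entries the components of the
gradients `∇p_α(z_i)`, for `α` ranging over multi-indices with `|α| ≤ D⁺`, has rank equal to
the number `(d+1)·D'` of its rows (i.e., its rows are linearly independent), provided
`D⁺ ≥ 2D' - 1`. -/
theorem stmt4 (d D' Dplus : ℕ) (hD : 2 * D' - 1 ≤ Dplus)
    (z : Fin D' → (Fin d → ℝ)) (hz : Function.Injective z) :
    LinearIndependent ℝ (Sum.elim
      (fun i : Fin D' =>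
        fun α : {α : Fin d → ℕ // (∑ j, α j) ≤ Dplus} => pMon α.1 (z i))
      (fun p : Fin D' × Fin d =>
        fun α : {α : Fin d → ℕ // (∑ j, α j) ≤ Dplus} =>
          fderiv ℝ (pMon α.1) (z p.1) (Pi.single p.2 1))) := by
  classical
  rw [Fintype.linearIndependent_iff]
  intro c hc
  set Lam : MvPolynomial (Fin d) ℝ →ₗ[ℝ] ℝ :=
    (∑ i : Fin D', c (Sum.inl i) • (aeval (R := ℝ) (z i)).toLinearMap)
    + ∑ p : Fin D' × Fin d, c (Sum.inr p) •
        ((aeval (R := ℝ) (z p.1)).toLinearMap ∘ₗ (pderiv p.2).toLinearMap) with hLamdef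
  have hLam : ∀ p : MvPolynomial (Fin d) ℝ, Lam p = (∑ i, c (Sum.inl i) * eval (z i) p)
      + ∑ q : Fin D' × Fin d, c (Sum.inr q) * eval (z q.1) (pderiv q.2 p) := by
    intro p
    simp [hLamdef, LinearMap.sum_apply, aeval_eq_eval']
  have hA : ∀ m : Fin d →₀ ℕ, (∑ j, m j) ≤ Dplus → Lam (monomial m 1) = 0 := by
    intro m hm
    have h := congrFun hc (⟨⇑m, hm⟩ : {α : Fin d → ℕ // (∑ j, α j) ≤ Dplus})
    simp only [Finset.sum_apply, Pi.smul_apply, smul_eq_mul, Pi.zero_apply] at h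
    rw [Fintype.sum_sum_type] at h
    simp only [Sum.elim_inl, Sum.elim_inr] at h
    rw [hLam, ← h]
    have hsymm : Finsupp.equivFunOnFinite.symm (⇑m) = m :=
      Finsupp.equivFunOnFinite.symm_apply_apply m
    congr 1
    · exact Finset.sum_congr rfl fun i _ => by rw [pMon_eq_eval]
    · exact Finset.sum_congr rfl fun q _ => by rw [fderiv_pMon_eq, hsymm]
  have hB : ∀ p : MvPolynomial (Fin d) ℝ, p.totalDegree ≤ Dplus → Lam p = 0 := by
    intro p hp
    conv_lhs => rw [p.as_sum]
    rw [map_sum]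
    refine Finset.sum_eq_zero fun v hv => ?_
    have h1 : monomial v (coeff v p) = (coeff v p) • monomial v (1:ℝ) := by
      rw [smul_monomial, smul_eq_mul, mul_one]
    have h2 : (∑ j, v j) ≤ Dplus :=
      calc (∑ j, v j) = v.sum fun _ e => e := (Finsupp.sum_fintype v (fun _ e => e) fun j => rfl).symm
        _ ≤ p.totalDegree := le_totalDegree hv
        _ ≤ Dplus := hp
    rw [h1, map_smul, hA v h2, smul_zero]
  have hb : ∀ q : Fin D' × Fin d, c (Sum.inr q) = 0 := by
    rintro ⟨i, k⟩
    have hd1 : 0 < D' := lt_of_le_of_lt (Nat.zero_le _) i.2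
    set P : MvPolynomial (Fin d) ℝ := qpoly z i * (X k - C (z i k)) with hP
    have hdeg : P.totalDegree ≤ Dplus := by
      refine le_trans (totalDegree_mul _ _) ?_
      have h1 := totalDegree_qpoly z i
      have h2 : (X k - C (z i k) : MvPolynomial (Fin d) ℝ).totalDegree ≤ 1 := by
        rw [sub_eq_add_neg, ← C_neg]
        refine (totalDegree_add _ _).trans ?_
        simp [totalDegree_X, totalDegree_C]
      omega
    have h0 := hB P hdeg
    rw [hLam] at h0
    have hsum1 : (∑ j, c (Sum.inl j) * eval (z j) P) = 0 := by
      refine Finset.sum_eq_zero fun j _ => ?_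
      rcases eq_or_ne j i with rfl | hji
      · simp [hP]
      · simp [hP, eval_qpoly_ne z hji]
    have hev : ∀ (j : Fin D') (k' : Fin d), eval (z j) (pderiv k' P) =
        if ((j, k') : Fin D' × Fin d) = (i, k) then 1 else 0 := by
      intro j k'
      rw [hP, pderiv_mul, map_add, map_mul, map_mul]
      rcases eq_or_ne j i with rfl | hji
      · simp [eval_qpoly_self hz, map_sub, pderiv_X, pderiv_C, Pi.single_apply,
          Prod.ext_iff, eq_comm]
      · simp [eval_pderiv_qpoly_ne z hji, eval_qpoly_ne z hji, Prod.ext_iff, hji]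
    rw [hsum1, zero_add] at h0
    rw [Finset.sum_congr rfl (fun q _ => by rw [hev q.1 q.2])] at h0
    simp only [mul_ite, mul_one, mul_zero] at h0
    rwa [Finset.sum_ite_eq' univ ((i, k) : Fin D' × Fin d), if_pos (mem_univ _)] at h0
  have ha : ∀ i : Fin D', c (Sum.inl i) = 0 := by
    intro i
    have hd1 : 0 < D' := lt_of_le_of_lt (Nat.zero_le _) i.2
    have hdeg : (qpoly z i).totalDegree ≤ Dplus := (totalDegree_qpoly z i).trans (by omega)
    have h0 := hB _ hdeg
    rw [hLam] at h0
    have hs2 : (∑ q : Fin D' × Fin d, c (Sum.inr q) * eval (z q.1) (pderiv q.2 (qpoly z i))) = 0 :=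
      Finset.sum_eq_zero fun q _ => by rw [hb q, zero_mul]
    rw [hs2, add_zero] at h0
    have hs1 : (∑ j, c (Sum.inl j) * eval (z j) (qpoly z i)) = c (Sum.inl i) := by
      rw [Finset.sum_eq_single i (fun j _ hji => by rw [eval_qpoly_ne z hji, mul_zero]) (by simp)]
      rw [eval_qpoly_self hz, mul_one]
    rw [hs1] at h0
    exact h0
  intro s
  cases s with
  | inl i => exact ha i
  | inr q => exact hb q
end
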